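/- Let μ, τ, σ, δ, χ be real numbers with σ > 0, δ > 0, 0 ≤ χ < 1, α > 0, w₀ > 0, and let f(w) = α w₀^α / w^{α+1}. Then for all w > w₀ / (1-χ)^{1/δ}, the stationary jump-diffusion equation 0 = -(μ-τ) d/dw[w f(w)] + (1/2)σ² d²/dw²[w² f(w)] - δ f(w) + (δ/(1-χ)^{1/δ}) f(w/(1-χ)^{1/δ}) holds if and only if 0 = μ + (1/2)(α-1)σ² - τ - (δ/α)·[1 - (1-χ)^{α/δ}]. -/

import Mathlib

private lemma deriv_on_Ioi {F G : ℝ → ℝ} (h : ∀ x ∈ Set.Ioi (0:ℝ), F x = G x)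
    {w : ℝ} (hw : w ∈ Set.Ioi (0:ℝ)) : deriv F w = deriv G w := by
  apply Filter.EventuallyEq.deriv_eq
  exact Filter.eventuallyEq_of_mem (isOpen_Ioi.mem_nhds hw) h

/-- The Pareto ansatz solves the stationary jump-diffusion equation with an
estate tax if and only if the scalar characteristic equation for the Pareto
coefficient `α` holds. -/
theorem pareto_jump_diffusion_characteristic
    (μ τ σ δ χ α w₀ : ℝ)
    (hσ : 0 < σ) (hδ : 0 < δ) (hχ₀ : 0 ≤ χ) (hχ₁ : χ < 1)
    (hα : 0 < α) (hw₀ : 0 < w₀)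
    (f : ℝ → ℝ) (hf : ∀ w, f w = α * w₀ ^ α / w ^ (α + 1)) :
    ∀ w, w₀ / (1 - χ) ^ (1 / δ) < w →
      ((0 : ℝ) = -(μ - τ) * deriv (fun x => x * f x) w
          + (1 / 2) * σ ^ 2 * deriv (deriv (fun x => x ^ 2 * f x)) w
          - δ * f w
          + (δ / (1 - χ) ^ (1 / δ)) * f (w / (1 - χ) ^ (1 / δ))
        ↔ (0 : ℝ) = μ + (1 / 2) * (α - 1) * σ ^ 2 - τ
          - (δ / α) * (1 - (1 - χ) ^ (α / δ))) := by
  intro w hw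
  set k : ℝ := (1 - χ) ^ (1 / δ) with hk_def
  have h1χ : (0:ℝ) < 1 - χ := by linarith
  have hk : 0 < k := Real.rpow_pos_of_pos h1χ _
  have hwpos : 0 < w := lt_trans (div_pos hw₀ hk) hw
  set c : ℝ := α * w₀ ^ α with hc_def
  have hc : 0 < c := mul_pos hα (Real.rpow_pos_of_pos hw₀ _)
  set P : ℝ := w ^ (α + 1) with hP_def
  have hP : 0 < P := Real.rpow_pos_of_pos hwpos _
  set K : ℝ := (1 - χ) ^ (α / δ) with hK_def
  have hKk : k ^ α = K := by
    rw [hk_def, hK_def, ← Real.rpow_mul h1χ.le]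
    ring_nf
  have hinv : w ^ (-α - 1) = P⁻¹ := by
    rw [show -α - 1 = -(α + 1) by ring, Real.rpow_neg hwpos.le]
  -- pointwise identities on Ioi 0
  have e1 : ∀ x ∈ Set.Ioi (0:ℝ), x * f x = c * x ^ (-α) := by
    intro x hx
    rw [hf, show -α = 1 - (α+1) by ring, Real.rpow_sub hx, Real.rpow_one]
    ring
  have e2 : ∀ x ∈ Set.Ioi (0:ℝ), x ^ 2 * f x = c * x ^ (1 - α) := by
    intro x hx
    rw [hf, show (1:ℝ) - α = 2 - (α+1) by ring, Real.rpow_sub hx,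
      show (2:ℝ) = ((2:ℕ):ℝ) by norm_num, Real.rpow_natCast]
    ring
  -- first derivative
  have d1 : deriv (fun x => x * f x) w = c * (-α) * w ^ (-α - 1) := by
    rw [deriv_on_Ioi e1 hwpos]
    exact (((Real.hasDerivAt_rpow_const (p := -α) (Or.inl hwpos.ne')).const_mul
      c).congr_deriv (by ring)).deriv
  -- second derivative
  have d2inner : ∀ x ∈ Set.Ioi (0:ℝ),
      deriv (fun y => y ^ 2 * f y) x = c * (1 - α) * x ^ (-α) := by
    intro x hx
    rw [deriv_on_Ioi e2 hx]
    exact (((Real.hasDerivAt_rpow_const (p := 1 - α) (Or.inl (ne_of_gt hx))).const_mul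
      c).congr_deriv (by rw [show (1:ℝ) - α - 1 = -α by ring]; ring)).deriv
  have d2 : deriv (deriv (fun x => x ^ 2 * f x)) w
      = c * (1 - α) * (-α) * w ^ (-α - 1) := by
    rw [deriv_on_Ioi d2inner hwpos]
    exact (((Real.hasDerivAt_rpow_const (p := -α) (Or.inl hwpos.ne')).const_mul
      (c * (1 - α))).congr_deriv (by ring)).deriv
  -- jump term
  have e3 : f (w / k) = c * (K * k) / P := by
    rw [hf, Real.div_rpow hwpos.le hk.le, ← hKk,
      show α + 1 = α + 1 by rfl]
    rw [Real.rpow_add hk, Real.rpow_one]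
    field_simp
    exact hP_def
  have lhs_eq : -(μ - τ) * deriv (fun x => x * f x) w
          + (1 / 2) * σ ^ 2 * deriv (deriv (fun x => x ^ 2 * f x)) w
          - δ * f w
          + (δ / k) * f (w / k)
      = c / P * (α * (μ - τ) + (1/2) * σ^2 * α * (α - 1) - δ + δ * K) := by
    rw [d1, d2, hf w, e3, hinv]
    field_simp
    ring
  rw [lhs_eq]
  have hcP : c / P ≠ 0 := (div_pos hc hP).ne'
  have key : α * (μ + 1 / 2 * (α - 1) * σ ^ 2 - τ - δ / α * (1 - K))
      = α * (μ - τ) + 1/2 * σ^2 * α * (α - 1) - δ + δ * K := by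
    field_simp
    ring
  constructor
  · intro h
    have hE : α * (μ - τ) + 1/2 * σ^2 * α * (α - 1) - δ + δ * K = 0 := by
      rcases mul_eq_zero.mp h.symm with h' | h'
      · exact absurd h' hcP
      · exact h'
    have h2 : α * (μ + 1 / 2 * (α - 1) * σ ^ 2 - τ - δ / α * (1 - K)) = 0 := by
      rw [key, hE]
    rcases mul_eq_zero.mp h2 with h' | h'
    · exact absurd h' hα.ne'
    · exact h'.symm
  · intro h
    have hE : α * (μ - τ) + 1/2 * σ^2 * α * (α - 1) - δ + δ * K = 0 := by
      rw [← key, ← h, mul_zero]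
    rw [hE, mul_zero]
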